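/- arXiv:2503.22332 — 7 statements merged into one kernel-verified Lean document; each statement's English description precedes it below -/
import Mathlib

section
/- If P is a nonzero sdf-absorbing C-hyperideal of a commutative multiplicative hyperring H, then rad(P) = P. -/
open Pointwise

/-- A commutative multiplicative hyperring structure on an abelian group `H`. -/
structure MulHyperring (H : Type*) [AddCommGroup H] where
  hmul : H → H → Set H
  hmul_nonempty : ∀ x y : H, (hmul x y).Nonempty
  hmul_comm : ∀ x y : H, hmul x y = hmul y x
  hmul_assoc : ∀ x y z : H, (⋃ a ∈ hmul y z, hmul x a) = ⋃ b ∈ hmul x y, hmul b z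
  hmul_distrib : ∀ x y z : H, hmul x (y + z) ⊆ hmul x y + hmul x z
  hmul_neg : ∀ x y : H, hmul x (-y) = -(hmul x y)

namespace Hyper

variable {H : Type*} [AddCommGroup H] (mul : H → H → Set H)

/-- `P` is a hyperideal. -/
def IsIdeal (P : Set H) : Prop :=
  (0 : H) ∈ P ∧ (∀ x ∈ P, ∀ y ∈ P, x - y ∈ P) ∧ ∀ r : H, ∀ x ∈ P, mul r x ⊆ P

/-- Hyperproduct `a ∘ b₁ ∘ ⋯ ∘ bₙ`. -/
def hprod : H → List H → Set H
  | a, [] => {a}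
  | a, b :: l => ⋃ t ∈ mul a b, hprod t l

/-- `C` is a finite hyperproduct `c₁ ∘ ⋯ ∘ cₙ`. -/
def IsProduct (C : Set H) : Prop := ∃ (a : H) (l : List H), C = hprod mul a l

/-- `D` is a finite (nonempty) sum of finite hyperproducts. -/
def IsSum (D : Set H) : Prop :=
  ∃ L : List (Set H), L ≠ [] ∧ (∀ C ∈ L, IsProduct mul C) ∧ D = L.sum

/-- `P` is a `𝒞`-hyperideal. -/
def IsCIdeal (P : Set H) : Prop :=
  IsIdeal mul P ∧ ∀ C : Set H, IsProduct mul C → (C ∩ P).Nonempty → C ⊆ P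

/-- `P` is a strong `𝒞`-hyperideal. -/
def IsStrongCIdeal (P : Set H) : Prop :=
  IsIdeal mul P ∧ ∀ D : Set H, IsSum mul D → (D ∩ P).Nonempty → D ⊆ P

/-- The hypersquare `x² = x ∘ x`. -/
def sq (x : H) : Set H := mul x x

/-- `P` is an sdf-absorbing hyperideal. -/
def IsSdf (P : Set H) : Prop :=
  IsIdeal mul P ∧ P ≠ Set.univ ∧
    ∀ x y : H, x ≠ 0 → y ≠ 0 → sq mul x - sq mul y ⊆ P → x - y ∈ P ∨ x + y ∈ P

/-- `P` is a weakly sdf-absorbing hyperideal. -/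
def IsWeaklySdf (P : Set H) : Prop :=
  IsIdeal mul P ∧ P ≠ Set.univ ∧
    ∀ x y : H, x ≠ 0 → y ≠ 0 → (0 : H) ∉ sq mul x - sq mul y →
      sq mul x - sq mul y ⊆ P → x - y ∈ P ∨ x + y ∈ P

/-- `P` is a prime hyperideal. -/
def IsPrime (P : Set H) : Prop :=
  IsIdeal mul P ∧ P ≠ Set.univ ∧ ∀ x y : H, mul x y ⊆ P → x ∈ P ∨ y ∈ P

/-- The radical: intersection of the prime hyperideals containing `P`. -/
def rad (P : Set H) : Set H := ⋂₀ {Q : Set H | IsPrime mul Q ∧ P ⊆ Q}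

/-- `hpow mul x n` is the hyperpower `x^(n+1)`. -/
def hpow (x : H) (n : ℕ) : Set H := hprod mul x (List.replicate n x)

/-- `x` is nilpotent: `0 ∈ xⁿ` for some `n`. -/
def IsNilpotent (x : H) : Prop := ∃ n : ℕ, (0 : H) ∈ hpow mul x n

/-- `x` is a regular element: `x ∈ x² ∘ y` for some `y`. -/
def IsRegularElem (x : H) : Prop := ∃ y : H, x ∈ ⋃ t ∈ sq mul x, mul t y

/-- The hyperideal generated by a set `S`. -/
def span (S : Set H) : Set H := ⋂₀ {Q : Set H | IsIdeal mul Q ∧ S ⊆ Q}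

/-- `P` is a maximal hyperideal. -/
def IsMaximal (P : Set H) : Prop :=
  IsIdeal mul P ∧ P ≠ Set.univ ∧
    ∀ B : Set H, IsIdeal mul B → P ⊆ B → B = P ∨ B = Set.univ

end Hyper

/-- Componentwise hypermultiplication on a product. -/
def prodMul {H₁ H₂ : Type*} (m₁ : H₁ → H₁ → Set H₁) (m₂ : H₂ → H₂ → Set H₂) :
    H₁ × H₂ → H₁ × H₂ → Set (H₁ × H₂) :=
  fun a b => (m₁ a.1 b.1) ×ˢ (m₂ a.2 b.2)

/-! If `x ∉ P`, no hyperpower of `x` meets `P`: since `P` is a `𝒞`-hyperideal such a power would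
lie in `P` entirely, and sdf-absorption, tested against a nonzero element `a` of `P` (so that
`t² - a² ⊆ P` whenever `t² ⊆ P`), gives `t ∈ P` from `t ∘ t ⊆ P`, which brings the exponent
down to `x ∈ P`. The hyperpowers of `x` are closed under `∘`, so by Zorn a hyperideal containing
`P` and maximal among those avoiding them exists and is prime; hence `x ∉ rad P`. -/

namespace MulHyperring

variable {H : Type*} [AddCommGroup H] (M : MulHyperring H)

lemma exists_mem_hmul_assoc (c a b v : H) :
    (∃ r ∈ M.hmul a b, v ∈ M.hmul c r) ↔ ∃ s ∈ M.hmul c a, v ∈ M.hmul s b := by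
  simpa using Set.ext_iff.mp (M.hmul_assoc c a b) v

lemma exists_mem_hmul_left_comm (c r a v : H) :
    (∃ y ∈ M.hmul r a, v ∈ M.hmul c y) ↔ ∃ t ∈ M.hmul c a, v ∈ M.hmul r t := by
  rw [M.exists_mem_hmul_assoc, M.exists_mem_hmul_assoc, M.hmul_comm c r]

lemma hmul_subset_of_mem_closure (G : AddSubgroup H) {c : H} (h0 : M.hmul c 0 ⊆ G)
    {S : Set H} (hS : ∀ y ∈ S, M.hmul c y ⊆ G) {u : H} (hu : u ∈ AddSubgroup.closure S) :
    M.hmul c u ⊆ G := by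
  induction hu using AddSubgroup.closure_induction with
  | mem y hy => exact hS y hy
  | zero => exact h0
  | add y z _ _ hy hz =>
    refine (M.hmul_distrib c y z).trans ?_
    rintro _ ⟨v, hv, w, hw, rfl⟩
    exact G.add_mem (hy hv) (hz hw)
  | neg y _ hy =>
    rw [M.hmul_neg]
    exact fun w hw => by simpa using G.neg_mem (hy hw)

end MulHyperring

namespace Hyper

variable {H : Type*} [AddCommGroup H]

namespace IsIdeal

variable {mul : H → H → Set H} {Q : Set H}

lemma neg_mem (hQ : IsIdeal mul Q) {q : H} (hq : q ∈ Q) : -q ∈ Q := by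
  simpa using hQ.2.1 0 hQ.1 q hq

lemma add_mem (hQ : IsIdeal mul Q) {a b : H} (ha : a ∈ Q) (hb : b ∈ Q) : a + b ∈ Q := by
  simpa using hQ.2.1 a ha (-b) (hQ.neg_mem hb)

def toAddSubgroup (hQ : IsIdeal mul Q) : AddSubgroup H where
  carrier := Q
  zero_mem' := hQ.1
  add_mem' := hQ.add_mem
  neg_mem' := hQ.neg_mem

lemma hmul_subset_left (M : MulHyperring H) (hQ : IsIdeal M.hmul Q) {x : H}
    (hx : x ∈ Q) (r : H) : M.hmul x r ⊆ Q :=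
  M.hmul_comm x r ▸ hQ.2.2 r x hx

lemma sUnion_of_isChain {c : Set (Set H)} (hc : ∀ Q ∈ c, IsIdeal mul Q)
    (hchain : IsChain (· ⊆ ·) c) (hne : c.Nonempty) : IsIdeal mul (⋃₀ c) := by
  obtain ⟨Q₀, hQ₀⟩ := hne
  refine ⟨⟨Q₀, hQ₀, (hc Q₀ hQ₀).1⟩, ?_, ?_⟩
  · rintro u ⟨Q₁, hQ₁, hu⟩ v ⟨Q₂, hQ₂, hv⟩
    rcases hchain.total hQ₁ hQ₂ with h | h
    · exact ⟨Q₂, hQ₂, (hc Q₂ hQ₂).2.1 u (h hu) v hv⟩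
    · exact ⟨Q₁, hQ₁, (hc Q₁ hQ₁).2.1 u hu v (h hv)⟩
  · rintro r u ⟨Q₁, hQ₁, hu⟩
    exact ((hc Q₁ hQ₁).2.2 r u hu).trans (Set.subset_sUnion_of_mem hQ₁)

end IsIdeal

section Hyperpowers

variable (M : MulHyperring H)

lemma hprod_append (a : H) (l₁ l₂ : List H) :
    hprod M.hmul a (l₁ ++ l₂) = ⋃ t ∈ hprod M.hmul a l₁, hprod M.hmul t l₂ := by
  induction l₁ generalizing a with
  | nil => simp [hprod]
  | cons b l ih =>
    ext u
    simp only [List.cons_append, hprod, Set.mem_iUnion, ih]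
    exact ⟨fun ⟨t, ht, s, hs, hu⟩ => ⟨s, ⟨t, ht, hs⟩, hu⟩,
      fun ⟨s, ⟨t, ht, hs⟩, hu⟩ => ⟨t, ht, s, hs, hu⟩⟩

lemma biUnion_hmul_hprod (c a : H) (l : List H) :
    (⋃ t ∈ hprod M.hmul a l, M.hmul c t) = ⋃ s ∈ M.hmul c a, hprod M.hmul s l := by
  induction l generalizing a with
  | nil => simp [hprod]
  | cons b l ih =>
    ext u
    simp only [hprod, Set.mem_iUnion, exists_prop]
    constructor
    · rintro ⟨t, ⟨r, hr, ht⟩, hu⟩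
      have hu' := Set.mem_biUnion ht hu
      rw [ih] at hu'
      obtain ⟨s, hs, hus⟩ := Set.mem_iUnion₂.mp hu'
      obtain ⟨w, hw, hsw⟩ := (M.exists_mem_hmul_assoc c a b s).mp ⟨r, hr, hs⟩
      exact ⟨w, hw, s, hsw, hus⟩
    · rintro ⟨w, hw, s, hsw, hu⟩
      obtain ⟨r, hr, hs⟩ := (M.exists_mem_hmul_assoc c a b s).mpr ⟨w, hw, hsw⟩
      have hu' : u ∈ ⋃ s ∈ M.hmul c r, hprod M.hmul s l := Set.mem_biUnion hs hu
      rw [← ih] at hu'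
      obtain ⟨t, ht, hut⟩ := Set.mem_iUnion₂.mp hu'
      exact ⟨t, ⟨r, hr, ht⟩, hut⟩

lemma self_mem_hpow_zero (x : H) : x ∈ hpow M.hmul x 0 := rfl

lemma hmul_subset_hpow {x t₁ t₂ : H} {m k : ℕ}
    (h₁ : t₁ ∈ hpow M.hmul x m) (h₂ : t₂ ∈ hpow M.hmul x k) :
    M.hmul t₁ t₂ ⊆ hpow M.hmul x (m + k + 1) := by
  intro u hu
  rw [hpow, show m + k + 1 = m + (k + 1) by omega, List.replicate_add, List.replicate_succ,
    hprod_append]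
  refine Set.mem_biUnion h₁ ?_
  simp only [hprod]
  rw [← biUnion_hmul_hprod]
  exact Set.mem_biUnion h₂ hu

lemma hpow_succ (x : H) (n : ℕ) :
    hpow M.hmul x (n + 1) = ⋃ t ∈ hpow M.hmul x n, M.hmul t x := by
  simp [hpow, List.replicate_succ', hprod_append, hprod]

lemma hpow_succ_subset {P : Set H} (hP : IsIdeal M.hmul P) {x : H} {n : ℕ}
    (h : hpow M.hmul x n ⊆ P) : hpow M.hmul x (n + 1) ⊆ P := by
  rw [hpow_succ]
  exact Set.iUnion₂_subset fun t ht => hP.hmul_subset_left M (h ht) x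

lemma hpow_subset_of_le {P : Set H} (hP : IsIdeal M.hmul P) {x : H} {n m : ℕ}
    (hnm : n ≤ m) (h : hpow M.hmul x n ⊆ P) : hpow M.hmul x m ⊆ P := by
  induction m, hnm using Nat.le_induction with
  | base => exact h
  | succ m _ ih => exact hpow_succ_subset M hP ih

lemma hmul_subset_iUnion_hpow (x : H) :
    ∀ s ∈ ⋃ n, hpow M.hmul x n, ∀ t ∈ ⋃ n, hpow M.hmul x n,
      M.hmul s t ⊆ ⋃ n, hpow M.hmul x n := by
  simp only [Set.mem_iUnion]
  rintro s ⟨m, hs⟩ t ⟨k, ht⟩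
  exact (hmul_subset_hpow M hs ht).trans (Set.subset_iUnion _ _)

end Hyperpowers

namespace IsSdf

variable {mul : H → H → Set H} {P : Set H}

lemma mem_of_sq_subset (hsdf : IsSdf mul P) (hP0 : P ≠ {0}) {y : H} (hy : sq mul y ⊆ P) :
    y ∈ P := by
  obtain ⟨hP, -, habsorb⟩ := hsdf
  obtain rfl | hy0 := eq_or_ne y 0
  · exact hP.1
  obtain ⟨a, haP, ha0⟩ := ((Set.nontrivial_iff_ne_singleton hP.1).mpr hP0).exists_ne 0
  have hsub : sq mul y - sq mul a ⊆ P := by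
    rintro _ ⟨t, ht, s, hs, rfl⟩
    exact hP.2.1 t (hy ht) s (hP.2.2 a a haP hs)
  rcases habsorb y a hy0 ha0 hsub with h | h
  · simpa using hP.add_mem h haP
  · simpa using hP.2.1 _ h a haP

lemma mem_of_hpow_subset {M : MulHyperring H} (hsdf : IsSdf M.hmul P) (hP0 : P ≠ {0})
    {x : H} {n : ℕ} (h : hpow M.hmul x n ⊆ P) : x ∈ P := by
  induction n with
  | zero => exact h (self_mem_hpow_zero M x)
  | succ n ih =>
    refine ih fun t ht => hsdf.mem_of_sq_subset hP0 ?_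
    exact (hmul_subset_hpow M ht ht).trans (hpow_subset_of_le M hsdf.1 (by omega) h)

end IsSdf

/-- The hyperideal generated by `Q ∪ {a}`, when `Q` is a hyperideal. -/
def adjoin (mul : H → H → Set H) (Q : Set H) (a : H) : Set H :=
  AddSubgroup.closure (Q ∪ insert a (⋃ r, mul r a))

section Adjoin

variable (M : MulHyperring H) {Q : Set H}

lemma subset_adjoin (a : H) : Q ⊆ adjoin M.hmul Q a :=
  fun _ h => AddSubgroup.subset_closure (Or.inl h)

lemma mem_adjoin_self (a : H) : a ∈ adjoin M.hmul Q a :=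
  AddSubgroup.subset_closure (Or.inr (Or.inl rfl))

lemma hmul_subset_adjoin (r a : H) : M.hmul r a ⊆ adjoin M.hmul Q a :=
  fun _ h => AddSubgroup.subset_closure (Or.inr (Or.inr (Set.mem_iUnion.mpr ⟨r, h⟩)))

lemma isIdeal_adjoin (hQ : IsIdeal M.hmul Q) (a : H) : IsIdeal M.hmul (adjoin M.hmul Q a) := by
  refine ⟨AddSubgroup.zero_mem _, fun u hu v hv => AddSubgroup.sub_mem _ hu hv, ?_⟩
  intro r u hu
  refine M.hmul_subset_of_mem_closure _ ((hQ.2.2 r 0 hQ.1).trans (subset_adjoin M a)) ?_ hu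
  rintro y (hy | rfl | hy)
  · exact (hQ.2.2 r y hy).trans (subset_adjoin M _)
  · exact hmul_subset_adjoin M r y
  · obtain ⟨r', hy⟩ := Set.mem_iUnion.mp hy
    intro w hw
    obtain ⟨s, -, hws⟩ := (M.exists_mem_hmul_assoc r r' a w).mp ⟨y, hy, hw⟩
    exact hmul_subset_adjoin M s a hws

lemma hmul_subset_of_mem_adjoin (hQ : IsIdeal M.hmul Q) {a c : H} (hca : M.hmul c a ⊆ Q)
    {u : H} (hu : u ∈ adjoin M.hmul Q a) : M.hmul c u ⊆ Q := by
  refine M.hmul_subset_of_mem_closure hQ.toAddSubgroup (hQ.2.2 c 0 hQ.1) ?_ hu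
  rintro y (hy | rfl | hy)
  · exact hQ.2.2 c y hy
  · exact hca
  · obtain ⟨r, hy⟩ := Set.mem_iUnion.mp hy
    intro w hw
    obtain ⟨t, ht, hwt⟩ := (M.exists_mem_hmul_left_comm c r a w).mp ⟨y, hy, hw⟩
    exact hQ.2.2 r t (hca ht) hwt

end Adjoin

section PrimeAvoidance

variable (M : MulHyperring H) {S : Set H}

/-- Were `a ∘ b ⊆ Q` with `a, b ∉ Q`, the hyperideals generated by `Q, a` and by `Q, b` would
meet `S` in some `t₁` and `t₂`, and then `t₁ ∘ t₂` would lie in both `Q` and `S`. -/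
lemma isPrime_of_maximal_disjoint (hS : ∀ s ∈ S, ∀ t ∈ S, M.hmul s t ⊆ S) (hSne : S.Nonempty)
    {Q : Set H} (hQ : Maximal (fun Q => IsIdeal M.hmul Q ∧ Disjoint S Q) Q) :
    IsPrime M.hmul Q := by
  obtain ⟨hQI, hQS⟩ := hQ.1
  refine ⟨hQI, fun h => hSne.ne_empty (Set.disjoint_univ.mp (h ▸ hQS)), fun a b hab => ?_⟩
  by_contra! hab'
  have hmeet : ∀ c ∉ Q, ∃ t ∈ S, t ∈ adjoin M.hmul Q c := fun c hc => by
    refine Set.not_disjoint_iff.mp fun hdisj => hc ?_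
    rw [hQ.eq_of_subset ⟨isIdeal_adjoin M hQI c, hdisj⟩ (subset_adjoin M c)]
    exact mem_adjoin_self M c
  obtain ⟨t₁, ht₁S, ht₁⟩ := hmeet a hab'.1
  obtain ⟨t₂, ht₂S, ht₂⟩ := hmeet b hab'.2
  have hbt₁ : M.hmul b t₁ ⊆ Q := hmul_subset_of_mem_adjoin M hQI (M.hmul_comm b a ▸ hab) ht₁
  have ht₁t₂ : M.hmul t₁ t₂ ⊆ Q :=
    hmul_subset_of_mem_adjoin M hQI (M.hmul_comm t₁ b ▸ hbt₁) ht₂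
  obtain ⟨w, hw⟩ := M.hmul_nonempty t₁ t₂
  exact Set.disjoint_left.mp hQS (hS t₁ ht₁S t₂ ht₂S hw) (ht₁t₂ hw)

lemma exists_isPrime_superset_disjoint (hS : ∀ s ∈ S, ∀ t ∈ S, M.hmul s t ⊆ S)
    (hSne : S.Nonempty) {P : Set H} (hP : IsIdeal M.hmul P) (hPS : Disjoint S P) :
    ∃ Q, IsPrime M.hmul Q ∧ P ⊆ Q ∧ Disjoint S Q := by
  obtain ⟨Q, hPQ, hQ⟩ := zorn_subset_nonempty {Q | IsIdeal M.hmul Q ∧ Disjoint S Q}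
    (fun c hc hchain hne => ⟨⋃₀ c,
      ⟨IsIdeal.sUnion_of_isChain (fun Q hQ => (hc hQ).1) hchain hne,
        Set.disjoint_sUnion_right.mpr fun Q hQ => (hc hQ).2⟩,
      fun _ => Set.subset_sUnion_of_mem⟩) P ⟨hP, hPS⟩
  exact ⟨Q, isPrime_of_maximal_disjoint M hS hSne hQ, hPQ, hQ.1.2⟩

end PrimeAvoidance

end Hyper

/-- a nonzero sdf-absorbing `𝒞`-hyperideal equals its radical. -/
theorem stmt0 {H : Type*} [AddCommGroup H] (M : MulHyperring H) (P : Set H)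
    (hP0 : P ≠ ({0} : Set H)) (hC : Hyper.IsCIdeal M.hmul P)
    (hsdf : Hyper.IsSdf M.hmul P) :
    Hyper.rad M.hmul P = P := by
  refine Set.Subset.antisymm (fun x hx => ?_) fun p hp Q hQ => hQ.2 hp
  by_contra hxP
  have hx_pow : x ∈ ⋃ n, Hyper.hpow M.hmul x n :=
    Set.mem_iUnion.mpr ⟨0, Hyper.self_mem_hpow_zero M x⟩
  have hdisj : Disjoint (⋃ n, Hyper.hpow M.hmul x n) P :=
    Set.disjoint_iUnion_left.mpr fun n => Set.disjoint_left.mpr fun t ht htP =>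
      hxP (hsdf.mem_of_hpow_subset hP0 (hC.2 _ ⟨x, _, rfl⟩ ⟨t, ht, htP⟩))
  obtain ⟨Q, hQ, hPQ, hQx⟩ := Hyper.exists_isPrime_superset_disjoint M
    (Hyper.hmul_subset_iUnion_hpow M x) ⟨x, hx_pow⟩ hC.1 hdisj
  exact Set.disjoint_left.mp hQx hx_pow (hx Q ⟨hQ, hPQ⟩)
end

section
/- Let H be a commutative multiplicative hyperring of characteristic 2 and P a proper strong C-hyperideal of H. If rad(P) = P, then P is an sdf-absorbing hyperideal of H. -/
open Pointwise

/-!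
Given `x² - y² ⊆ P`, pick `a ∈ x ∘ x`, `b ∈ y ∘ y`, `c ∈ x ∘ y`. In characteristic 2,
`a - b = a + b + c + c` lies in the sum of products `D = x ∘ x + y ∘ y + x ∘ y + x ∘ y`, which
therefore meets `P`; as `P` is a strong `𝒞`-hyperideal, `D ⊆ P`. Distributivity gives
`(x + y) ∘ (x + y) ⊆ D`, so `x + y` lies in every prime hyperideal containing `P`, i.e. in
`rad P = P`.
-/

theorem Set.sub_mem_add_add_add_self {G : Type*} [AddCommGroup G] (hchar : ∀ g : G, g + g = 0)
    {A B C : Set G} {a b : G} (ha : a ∈ A) (hb : b ∈ B) (hC : C.Nonempty) :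
    a - b ∈ A + B + C + C := by
  obtain ⟨c, hc⟩ := hC
  have hab : a - b = a + b + c + c := by
    rw [add_assoc _ c, hchar, add_zero, sub_eq_add_neg, neg_eq_of_add_eq_zero_left (hchar b)]
  rw [hab]
  exact Set.add_mem_add (Set.add_mem_add (Set.add_mem_add ha hb) hc) hc

namespace MulHyperring

variable {H : Type*} [AddCommGroup H] (M : MulHyperring H)

theorem hmul_add_add_subset (x y : H) :
    M.hmul (x + y) (x + y) ⊆ M.hmul x x + M.hmul y y + M.hmul x y + M.hmul x y :=
  calc M.hmul (x + y) (x + y)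
      ⊆ M.hmul (x + y) x + M.hmul (x + y) y := M.hmul_distrib _ _ _
    _ = M.hmul x (x + y) + M.hmul y (x + y) := by rw [M.hmul_comm _ x, M.hmul_comm _ y]
    _ ⊆ (M.hmul x x + M.hmul x y) + (M.hmul y x + M.hmul y y) :=
        Set.add_subset_add (M.hmul_distrib _ _ _) (M.hmul_distrib _ _ _)
    _ = M.hmul x x + M.hmul y y + M.hmul x y + M.hmul x y := by rw [M.hmul_comm y x]; abel

end MulHyperring

namespace Hyper

theorem isProduct_mul {H : Type*} (mul : H → H → Set H) (a b : H) : IsProduct mul (mul a b) :=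
  ⟨a, [b], by simp [hprod]⟩

theorem mem_rad_of_sq_subset {H : Type*} [AddCommGroup H] {mul : H → H → Set H} {P : Set H}
    {x : H} (hx : mul x x ⊆ P) : x ∈ rad mul P :=
  fun _ ⟨⟨_, _, hprime⟩, hPQ⟩ => (hprime x x (hx.trans hPQ)).elim id id

end Hyper

/-- in characteristic 2, a proper strong `𝒞`-hyperideal equal to its radical
is sdf-absorbing. -/
theorem stmt1 {H : Type*} [AddCommGroup H] (M : MulHyperring H)
    (hchar : ∀ x : H, x + x = 0) (P : Set H)
    (hS : Hyper.IsStrongCIdeal M.hmul P) (hproper : P ≠ Set.univ)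
    (hrad : Hyper.rad M.hmul P = P) :
    Hyper.IsSdf M.hmul P := by
  refine ⟨hS.1, hproper, fun x y _ _ hsub => Or.inr ?_⟩
  obtain ⟨a, ha⟩ := M.hmul_nonempty x x
  obtain ⟨b, hb⟩ := M.hmul_nonempty y y
  set D := M.hmul x x + M.hmul y y + M.hmul x y + M.hmul x y
  have hD : Hyper.IsSum M.hmul D :=
    ⟨[M.hmul x x, M.hmul y y, M.hmul x y, M.hmul x y], by simp,
      by simp [Hyper.isProduct_mul], by simp [D, add_assoc]⟩
  have hDP : D ⊆ P := hS.2 D hD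
    ⟨a - b, Set.sub_mem_add_add_add_self hchar ha hb (M.hmul_nonempty x y),
      hsub (Set.sub_mem_sub ha hb)⟩
  rw [← hrad]
  exact Hyper.mem_rad_of_sq_subset ((M.hmul_add_add_subset x y).trans hDP)
end

section
/- Let P be a proper strong C-hyperideal of a commutative multiplicative hyperring H. Then P is sdf-absorbing if and only if for all nonzero x, y ∈ H \ P with x∘y ⊆ P, there exist no nonzero a, b ∈ H with a − b = x and a + b = y. -/
open Pointwise

/-!
For a strong `𝒞`-hyperideal `P`, `a² - b² ⊆ P` holds iff `(a - b)∘(a + b) ⊆ P`: both sets are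
nonempty and lie in the single sum of products `a∘a + a∘b + (-a)∘b + (-b)∘b`, which is contained
in `P` as soon as it meets `P`. The condition of the theorem is then sdf-absorption read through the
substitution `x = a - b`, `y = a + b`.
-/

namespace Hyper

variable {H : Type*}

theorem hprod_singleton (mul : H → H → Set H) (c d : H) : hprod mul c [d] = mul c d := by
  simp [hprod]

theorem isProduct_mul_s3 (mul : H → H → Set H) (c d : H) : IsProduct mul (mul c d) :=
  ⟨c, [d], (hprod_singleton mul c d).symm⟩

def sqSubSqExpansion [AddCommGroup H] (mul : H → H → Set H) (a b : H) : Set H :=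
  mul a a + (mul a b + (mul (-a) b + mul (-b) b))

theorem isSum_sqSubSqExpansion [AddCommGroup H] (mul : H → H → Set H) (a b : H) :
    IsSum mul (sqSubSqExpansion mul a b) := by
  refine ⟨[mul a a, mul a b, mul (-a) b, mul (-b) b], List.cons_ne_nil _ _, ?_, ?_⟩
  · simp only [List.mem_cons, List.not_mem_nil, or_false]
    rintro C (rfl | rfl | rfl | rfl) <;> exact isProduct_mul_s3 mul _ _
  · simp [sqSubSqExpansion]

theorem IsStrongCIdeal.subset_of_subset_sum [AddCommGroup H] {mul : H → H → Set H}
    {P D S T : Set H} (hP : IsStrongCIdeal mul P) (hD : IsSum mul D) (hSD : S ⊆ D) (hTD : T ⊆ D)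
    (hS : S.Nonempty) (hSP : S ⊆ P) : T ⊆ P := by
  obtain ⟨s, hs⟩ := hS
  exact hTD.trans (hP.2 D hD ⟨s, hSD hs, hSP hs⟩)

end Hyper

namespace MulHyperring

open Hyper

variable {H : Type*} [AddCommGroup H] (M : MulHyperring H)

theorem hmul_neg_left (a b : H) : M.hmul (-a) b = -M.hmul a b := by
  rw [M.hmul_comm, M.hmul_neg, M.hmul_comm]

theorem sq_sub_sq_subset_sqSubSqExpansion (a b : H) :
    sq M.hmul a - sq M.hmul b ⊆ sqSubSqExpansion M.hmul a b := by
  have hzero : (0 : H) ∈ M.hmul a b + M.hmul (-a) b := by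
    rw [hmul_neg_left, ← sub_eq_add_neg]
    exact (M.hmul_nonempty a b).zero_mem_sub
  calc sq M.hmul a - sq M.hmul b = M.hmul a a + (0 + M.hmul (-b) b) := by
        rw [Hyper.sq, Hyper.sq, hmul_neg_left, zero_add, sub_eq_add_neg]
    _ ⊆ M.hmul a a + ((M.hmul a b + M.hmul (-a) b) + M.hmul (-b) b) :=
        Set.add_subset_add_left (Set.add_subset_add_right (Set.singleton_subset_iff.2 hzero))
    _ = sqSubSqExpansion M.hmul a b := by rw [sqSubSqExpansion, add_assoc]

theorem hmul_sub_add_subset_sqSubSqExpansion (a b : H) :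
    M.hmul (a - b) (a + b) ⊆ sqSubSqExpansion M.hmul a b :=
  calc M.hmul (a - b) (a + b) = M.hmul (a + b) (a + -b) := by rw [M.hmul_comm, sub_eq_add_neg]
    _ ⊆ M.hmul (a + b) a + -M.hmul (a + b) b := by
        rw [← M.hmul_neg]; exact M.hmul_distrib _ _ _
    _ = M.hmul a (a + b) + -M.hmul b (a + b) := by rw [M.hmul_comm _ a, M.hmul_comm _ b]
    _ ⊆ (M.hmul a a + M.hmul a b) + -(M.hmul b a + M.hmul b b) :=
        Set.add_subset_add (M.hmul_distrib _ _ _) (Set.neg_subset_neg.2 (M.hmul_distrib _ _ _))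
    _ = sqSubSqExpansion M.hmul a b := by
        rw [sqSubSqExpansion, neg_add, ← hmul_neg_left M b b, M.hmul_comm b a,
          ← hmul_neg_left M a b, add_assoc]

theorem sq_sub_sq_subset_iff_hmul_subset {P : Set H} (hP : IsStrongCIdeal M.hmul P) (a b : H) :
    sq M.hmul a - sq M.hmul b ⊆ P ↔ M.hmul (a - b) (a + b) ⊆ P :=
  have hD := isSum_sqSubSqExpansion M.hmul a b
  have hsq := M.sq_sub_sq_subset_sqSubSqExpansion a b
  have hmul := M.hmul_sub_add_subset_sqSubSqExpansion a b
  ⟨hP.subset_of_subset_sum hD hsq hmul ((M.hmul_nonempty a a).sub (M.hmul_nonempty b b)),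
    hP.subset_of_subset_sum hD hmul hsq (M.hmul_nonempty _ _)⟩

end MulHyperring

/-- a proper strong `𝒞`-hyperideal `P` is sdf-absorbing iff whenever
`x ∘ y ⊆ P` for nonzero `x, y ∉ P`, the system `a - b = x`, `a + b = y` has no
solution with `a, b` nonzero. -/
theorem stmt3 {H : Type*} [AddCommGroup H] (M : MulHyperring H) (P : Set H)
    (hS : Hyper.IsStrongCIdeal M.hmul P) (hproper : P ≠ Set.univ) :
    Hyper.IsSdf M.hmul P ↔
      ∀ x y : H, x ≠ 0 → y ≠ 0 → x ∉ P → y ∉ P → M.hmul x y ⊆ P →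
        ¬ ∃ a b : H, a ≠ 0 ∧ b ≠ 0 ∧ a - b = x ∧ a + b = y := by
  constructor
  · rintro ⟨-, -, hsdf⟩ _ _ _ _ hsubP haddP hmulP ⟨a, b, ha, hb, rfl, rfl⟩
    rcases hsdf a b ha hb ((M.sq_sub_sq_subset_iff_hmul_subset hS a b).2 hmulP) with h | h
    exacts [hsubP h, haddP h]
  · refine fun h => ⟨hS.1, hproper, fun a b ha hb hsq => ?_⟩
    by_contra! ⟨hsubP, haddP⟩
    exact h (a - b) (a + b) (fun h0 => hsubP (h0 ▸ hS.1.1)) (fun h0 => haddP (h0 ▸ hS.1.1))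
      hsubP haddP ((M.sq_sub_sq_subset_iff_hmul_subset hS a b).1 hsq) ⟨a, b, ha, hb, rfl, rfl⟩
end

section
/- Let θ : H₁ → H₂ be a surjective good homomorphism of commutative multiplicative hyperrings and P₁ a strong C-hyperideal of H₁ with ker(θ) ⊆ P₁. If P₁ is an sdf-absorbing hyperideal of H₁, then θ(P₁) is an sdf-absorbing hyperideal of H₂. -/
open Pointwise

/-! Since `θ` is additive and `ker θ ⊆ P₁`, the ideal `P₁` is saturated: `θ⁻¹(θ(P₁)) = P₁`.
As `θ` carries `a² - b²` onto `θ(a)² - θ(b)²`, the condition `θ(a)² - θ(b)² ⊆ θ(P₁)` pulls back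
to `a² - b² ⊆ P₁`, and the sdf-absorbing property of `P₁` pushes forward along `θ`. -/

namespace Hyper

variable {H₁ H₂ : Type*} [AddCommGroup H₁] [AddCommGroup H₂]
  {mul₁ : H₁ → H₁ → Set H₁} {mul₂ : H₂ → H₂ → Set H₂} {P : Set H₁}

theorem IsIdeal.add_mem_s9 (hP : IsIdeal mul₁ P) {x y : H₁} (hx : x ∈ P) (hy : y ∈ P) :
    x + y ∈ P := by
  simpa using hP.2.1 x hx _ (hP.2.1 0 hP.1 y hy)

theorem IsIdeal.preimage_image_eq (hP : IsIdeal mul₁ P) (f : H₁ →+ H₂)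
    (hker : ∀ x, f x = 0 → x ∈ P) : f ⁻¹' (f '' P) = P := by
  refine subset_antisymm ?_ (Set.subset_preimage_image f P)
  rintro t ⟨p, hp, hpt⟩
  have htp : t - p ∈ P := hker _ (by rw [map_sub, hpt, sub_self])
  simpa using hP.add_mem_s9 htp hp

theorem IsIdeal.image (hP : IsIdeal mul₁ P) (f : H₁ →+ H₂) (hf : Function.Surjective f)
    (hf_mul : ∀ x y, f '' mul₁ x y = mul₂ (f x) (f y)) : IsIdeal mul₂ (f '' P) := by
  refine ⟨⟨0, hP.1, map_zero f⟩, ?_, ?_⟩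
  · rintro _ ⟨p, hp, rfl⟩ _ ⟨q, hq, rfl⟩
    exact ⟨p - q, hP.2.1 p hp q hq, map_sub f p q⟩
  · rintro r _ ⟨p, hp, rfl⟩
    obtain ⟨s, rfl⟩ := hf r
    rw [← hf_mul]
    exact Set.image_mono (hP.2.2 s p hp)

theorem image_sq_sub_sq (f : H₁ →+ H₂) (hf_mul : ∀ x y, f '' mul₁ x y = mul₂ (f x) (f y))
    (a b : H₁) : f '' (sq mul₁ a - sq mul₁ b) = sq mul₂ (f a) - sq mul₂ (f b) := by
  rw [Set.image_sub, sq, sq, hf_mul, hf_mul, sq, sq]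

theorem IsSdf.image (hP : IsSdf mul₁ P) (f : H₁ →+ H₂) (hf : Function.Surjective f)
    (hf_mul : ∀ x y, f '' mul₁ x y = mul₂ (f x) (f y)) (hker : ∀ x, f x = 0 → x ∈ P) :
    IsSdf mul₂ (f '' P) := by
  obtain ⟨hid, hne, habs⟩ := hP
  have hsat := hid.preimage_image_eq f hker
  refine ⟨hid.image f hf hf_mul, fun huniv => hne ?_, ?_⟩
  · rw [← hsat, huniv, Set.preimage_univ]
  · intro x y hx hy hsq
    obtain ⟨a, rfl⟩ := hf x
    obtain ⟨b, rfl⟩ := hf y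
    have hab : sq mul₁ a - sq mul₁ b ⊆ P := by
      rwa [← hsat, ← Set.image_subset_iff, image_sq_sub_sq f hf_mul]
    rcases habs a b (by rintro rfl; exact hx (map_zero f))
        (by rintro rfl; exact hy (map_zero f)) hab with h | h
    · exact Or.inl ⟨a - b, h, map_sub f a b⟩
    · exact Or.inr ⟨a + b, h, map_add f a b⟩

end Hyper

theorem stmt9_general {H₁ H₂ : Type*} [AddCommGroup H₁] [AddCommGroup H₂]
    (M₁ : MulHyperring H₁) (M₂ : MulHyperring H₂) (θ : H₁ → H₂)
    (hadd : ∀ x y : H₁, θ (x + y) = θ x + θ y)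
    (hmul : ∀ x y : H₁, θ '' M₁.hmul x y = M₂.hmul (θ x) (θ y))
    (hsurj : Function.Surjective θ)
    (P₁ : Set H₁)
    (hker : ∀ x : H₁, θ x = 0 → x ∈ P₁)
    (hsdf : Hyper.IsSdf M₁.hmul P₁) :
    Hyper.IsSdf M₂.hmul (θ '' P₁) :=
  hsdf.image (AddMonoidHom.mk' θ hadd) hsurj hmul hker

/-- the image of an sdf-absorbing strong `𝒞`-hyperideal containing the
kernel, under a surjective good homomorphism, is sdf-absorbing. -/
theorem stmt9 {H₁ H₂ : Type*} [AddCommGroup H₁] [AddCommGroup H₂]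
    (M₁ : MulHyperring H₁) (M₂ : MulHyperring H₂) (θ : H₁ → H₂)
    (hadd : ∀ x y : H₁, θ (x + y) = θ x + θ y)
    (hmul : ∀ x y : H₁, θ '' M₁.hmul x y = M₂.hmul (θ x) (θ y))
    (hsurj : Function.Surjective θ)
    (P₁ : Set H₁) (hS : Hyper.IsStrongCIdeal M₁.hmul P₁)
    (hker : ∀ x : H₁, θ x = 0 → x ∈ P₁)
    (hsdf : Hyper.IsSdf M₁.hmul P₁) :
    Hyper.IsSdf M₂.hmul (θ '' P₁) :=
  stmt9_general M₁ M₂ θ hadd hmul hsurj P₁ hker hsdf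
end

section
/- Let P be a proper hyperideal of a commutative multiplicative hyperring H and Q a hyperideal with Q ⊊ P. Then P is an sdf-absorbing hyperideal of H if and only if P/Q is an sdf-absorbing hyperideal of the quotient hyperring H/Q. -/
/-!
Because `Q ⊆ P`, a coset `x + Q` lies in `P/Q` exactly when `x ∈ P`, so sdf-absorption of `P/Q`
is sdf-absorption of `P` tested only on `x, y ∉ Q`. The remaining pairs are handled by comparing
with some `c ∈ P \ Q`: if `a² ⊆ P` then `c² - a² ⊆ P`, hence `c - a ∈ P` or `c + a ∈ P`, so
`a ∈ P`. When `x ∈ Q` and `x² - y² ⊆ P`, this gives `y² ⊆ P`, then `y ∈ P` and `x - y ∈ P`.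
-/

open Pointwise

namespace Hyper

variable {H : Type*} [AddCommGroup H] {mul : H → H → Set H} {P Q : Set H}

theorem IsIdeal.sub_mem (hP : IsIdeal mul P) {a b : H} (ha : a ∈ P) (hb : b ∈ P) :
    a - b ∈ P :=
  hP.2.1 a ha b hb

theorem IsIdeal.add_mem_s11 (hP : IsIdeal mul P) {a b : H} (ha : a ∈ P) (hb : b ∈ P) :
    a + b ∈ P := by
  simpa using hP.sub_mem ha (hP.sub_mem hP.1 hb)

theorem IsIdeal.sq_subset (hP : IsIdeal mul P) {a : H} (ha : a ∈ P) : sq mul a ⊆ P :=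
  hP.2.2 a a ha

theorem IsIdeal.sub_subset (hP : IsIdeal mul P) {A B : Set H} (hA : A ⊆ P) (hB : B ⊆ P) :
    A - B ⊆ P :=
  Set.sub_subset_iff.2 fun _ ha _ hb => hP.sub_mem (hA ha) (hB hb)

theorem IsIdeal.subset_of_sub_subset_left (hP : IsIdeal mul P) {A B : Set H}
    (hA : A.Nonempty) (hAP : A ⊆ P) (h : A - B ⊆ P) : B ⊆ P := by
  obtain ⟨a, ha⟩ := hA
  intro b hb
  simpa using hP.sub_mem (hAP ha) (h (Set.sub_mem_sub ha hb))

theorem IsIdeal.subset_of_sub_subset_right (hP : IsIdeal mul P) {A B : Set H}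
    (hB : B.Nonempty) (hBP : B ⊆ P) (h : A - B ⊆ P) : A ⊆ P := by
  obtain ⟨b, hb⟩ := hB
  intro a ha
  simpa using hP.add_mem_s11 (h (Set.sub_mem_sub ha hb)) (hBP hb)

theorem exists_sub_mem_iff (hP : IsIdeal mul P) (hQ0 : (0 : H) ∈ Q) (hQP : Q ⊆ P) {z : H} :
    (∃ p ∈ P, z - p ∈ Q) ↔ z ∈ P := by
  refine ⟨fun ⟨p, hp, hzp⟩ => by simpa using hP.add_mem_s11 (hQP hzp) hp, fun hz => ⟨z, hz, ?_⟩⟩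
  simpa using hQ0

theorem mem_of_sq_subset (hP : IsIdeal mul P) (hQP : Q ⊂ P)
    (hsdf : ∀ x y : H, x ∉ Q → y ∉ Q → sq mul x - sq mul y ⊆ P → x - y ∈ P ∨ x + y ∈ P)
    {a : H} (ha : sq mul a ⊆ P) : a ∈ P := by
  by_cases haQ : a ∈ Q
  · exact hQP.subset haQ
  obtain ⟨c, hcP, hcQ⟩ := Set.exists_of_ssubset hQP
  rcases hsdf c a hcQ haQ (hP.sub_subset (hP.sq_subset hcP) ha) with h | h
  · simpa using hP.sub_mem hcP h
  · simpa using hP.sub_mem h hcP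

theorem isSdf_iff_of_ssubset (hsq : ∀ x : H, (sq mul x).Nonempty) (hP : IsIdeal mul P)
    (hQ0 : (0 : H) ∈ Q) (hQP : Q ⊂ P) :
    IsSdf mul P ↔ P ≠ Set.univ ∧
      ∀ x y : H, x ∉ Q → y ∉ Q → sq mul x - sq mul y ⊆ P → x - y ∈ P ∨ x + y ∈ P := by
  refine ⟨fun ⟨_, hproper, hsdf⟩ => ⟨hproper, fun x y hx hy =>
    hsdf x y (ne_of_mem_of_not_mem hQ0 hx).symm (ne_of_mem_of_not_mem hQ0 hy).symm⟩, ?_⟩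
  rintro ⟨hproper, hsdf⟩
  refine ⟨hP, hproper, fun x y _ _ hxy => ?_⟩
  by_cases hxQ : x ∈ Q
  · have hxP := hQP.subset hxQ
    have hyP := mem_of_sq_subset hP hQP hsdf
      (hP.subset_of_sub_subset_left (hsq x) (hP.sq_subset hxP) hxy)
    exact Or.inl (hP.sub_mem hxP hyP)
  by_cases hyQ : y ∈ Q
  · have hyP := hQP.subset hyQ
    have hxP := mem_of_sq_subset hP hQP hsdf
      (hP.subset_of_sub_subset_right (hsq y) (hP.sq_subset hyP) hxy)
    exact Or.inl (hP.sub_mem hxP hyP)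
  exact hsdf x y hxQ hyQ hxy

end Hyper

/-- The right-hand side is `P/Q` sdf-absorbing in `H/Q`, spelled out on representatives: `x + Q`
is nonzero iff `x ∉ Q`, it lies in `P/Q` iff `∃ p ∈ P, x - p ∈ Q`, and `(x + Q)²` is
`{t + Q : t ∈ x²}`. -/
theorem stmt11_general {H : Type*} [AddCommGroup H] (M : MulHyperring H) (P Q : Set H)
    (hP : Hyper.IsIdeal M.hmul P)
    (hQ : Hyper.IsIdeal M.hmul Q) (hQP : Q ⊂ P) :
    Hyper.IsSdf M.hmul P ↔
      ((∃ x : H, ∀ p ∈ P, x - p ∉ Q) ∧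
        ∀ x y : H, x ∉ Q → y ∉ Q →
          (∀ t ∈ Hyper.sq M.hmul x, ∀ s ∈ Hyper.sq M.hmul y, ∃ p ∈ P, t - s - p ∈ Q) →
          ((∃ p ∈ P, (x - y) - p ∈ Q) ∨ ∃ p ∈ P, (x + y) - p ∈ Q)) := by
  have hmem : ∀ z : H, (∃ p ∈ P, z - p ∈ Q) ↔ z ∈ P :=
    fun _ => Hyper.exists_sub_mem_iff hP hQ.1 hQP.subset
  have hout : ∀ x : H, (∀ p ∈ P, x - p ∉ Q) ↔ x ∉ P := fun x => by simpa using (hmem x).not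
  simp only [hmem, hout, ← Set.sub_subset_iff, ← Set.ne_univ_iff_exists_notMem]
  exact Hyper.isSdf_iff_of_ssubset (fun x => M.hmul_nonempty x x) hP hQ.1 hQP

/-- for hyperideals `Q ⊊ P`, `P` is sdf-absorbing in `H` iff `P/Q` is
sdf-absorbing in `H/Q`.  The right-hand side is stated in terms of cosets: a coset
`x + Q` is nonzero iff `x ∉ Q`, it lies in `P/Q` iff `∃ p ∈ P, x - p ∈ Q`, and the
quotient hyperproduct of `x + Q` and `y + Q` is `{z + Q : z ∈ x ∘ y}`. -/
theorem stmt11 {H : Type*} [AddCommGroup H] (M : MulHyperring H) (P Q : Set H)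
    (hP : Hyper.IsIdeal M.hmul P) (hPproper : P ≠ Set.univ)
    (hQ : Hyper.IsIdeal M.hmul Q) (hQP : Q ⊂ P) :
    Hyper.IsSdf M.hmul P ↔
      ((∃ x : H, ∀ p ∈ P, x - p ∉ Q) ∧
        ∀ x y : H, x ∉ Q → y ∉ Q →
          (∀ t ∈ Hyper.sq M.hmul x, ∀ s ∈ Hyper.sq M.hmul y, ∃ p ∈ P, t - s - p ∈ Q) →
          ((∃ p ∈ P, (x - y) - p ∈ Q) ∨ ∃ p ∈ P, (x + y) - p ∈ Q)) :=
  stmt11_general M P Q hP hQ hQP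
end

section
/- Let P be a proper hyperideal of a commutative multiplicative hyperring H. If the hyperideal M_m(P) of m×m hypermatrices over P is an sdf-absorbing hyperideal of M_m(H), then P is an sdf-absorbing hyperideal of H. -/
open Pointwise

open Pointwise in
/-- Hypermultiplication of `m × m` hypermatrices: `(A ∘ B)ᵢⱼ = Σₖ Aᵢₖ ∘ Bₖⱼ`. -/
def matHmul {H : Type*} [AddCommGroup H] (mul : H → H → Set H) {m : ℕ}
    (A B : Matrix (Fin m) (Fin m) H) : Set (Matrix (Fin m) (Fin m) H) :=
  {C | ∀ i j, C i j ∈ ∑ k : Fin m, mul (A i k) (B k j)}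

/-- if `M_m(P)` is an sdf-absorbing hyperideal of `M_m(H)`, then `P` is
an sdf-absorbing hyperideal of `H`. -/
theorem stmt12 {H : Type*} [AddCommGroup H] (M : MulHyperring H) (P : Set H)
    (hP : Hyper.IsIdeal M.hmul P) (hproper : P ≠ Set.univ) (m : ℕ) (hm : 0 < m)
    (hmat : ∀ A B : Matrix (Fin m) (Fin m) H, A ≠ 0 → B ≠ 0 →
      matHmul M.hmul A A - matHmul M.hmul B B ⊆
        {C : Matrix (Fin m) (Fin m) H | ∀ i j, C i j ∈ P} →
      (∀ i j, (A - B) i j ∈ P) ∨ ∀ i j, (A + B) i j ∈ P) :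
    Hyper.IsSdf M.hmul P := by
  refine ⟨hP, hproper, ?_⟩
  intro x y hx hy hsub
  obtain ⟨h0, hdiff, hmulP⟩ := hP
  have Padd : ∀ a ∈ P, ∀ b ∈ P, a + b ∈ P := by
    intro a ha b hb
    have hb' : (0 : H) - b ∈ P := hdiff 0 h0 b hb
    have := hdiff a ha _ hb'
    simpa using this
  have mul0 : ∀ r : H, M.hmul r 0 ⊆ P := fun r => hmulP r 0 h0
  have mul0' : ∀ r : H, M.hmul 0 r ⊆ P := by
    intro r; rw [M.hmul_comm]; exact mul0 r
  have hsumP : ∀ (s : Finset (Fin m)) (f : Fin m → Set H),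
      (∀ k ∈ s, f k ⊆ P) → (∑ k ∈ s, f k) ⊆ P := by
    intro s f
    induction s using Finset.cons_induction with
    | empty =>
      intro _ a ha
      simp only [Finset.sum_empty, Set.mem_zero] at ha
      simpa [ha] using h0
    | cons i s his ih =>
      intro hf
      rw [Finset.sum_cons]
      intro c hc
      rw [Set.mem_add] at hc
      obtain ⟨u, hu, v, hv, rfl⟩ := hc
      exact Padd u (hf i (Finset.mem_cons_self i s) hu) v
        (ih (fun k hk => hf k (Finset.mem_cons_of_mem hk)) hv)
  set i0 : Fin m := ⟨0, hm⟩
  set A : Matrix (Fin m) (Fin m) H := Matrix.single i0 i0 x with hA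
  set B : Matrix (Fin m) (Fin m) H := Matrix.single i0 i0 y with hB
  have hA0 : A ≠ 0 := by
    intro h
    apply hx
    have := congrFun (congrFun h i0) i0
    simpa [hA, Matrix.single] using this
  have hB0 : B ≠ 0 := by
    intro h
    apply hy
    have := congrFun (congrFun h i0) i0
    simpa [hB, Matrix.single] using this
  -- entries of hypersquares
  have key : ∀ (z : H) (C : Matrix (Fin m) (Fin m) H),
      C ∈ matHmul M.hmul (Matrix.single i0 i0 z) (Matrix.single i0 i0 z) →
      (∀ i j, ¬(i = i0 ∧ j = i0) → C i j ∈ P) ∧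
      ∃ s ∈ M.hmul z z, ∃ p ∈ P, C i0 i0 = s + p := by
    intro z C hC
    constructor
    · intro i j hij
      refine hsumP Finset.univ _ ?_ (hC i j)
      intro k _
      by_cases hik : i = i0 ∧ k = i0
      · have : ¬(k = i0 ∧ j = i0) := fun h => hij ⟨hik.1, h.2⟩
        have hz : Matrix.single i0 i0 z k j = 0 := by
          rw [Matrix.single]
          simp only [Matrix.of_apply]
          rw [if_neg (fun h => this ⟨h.1.symm, h.2.symm⟩)]
        rw [hz]; exact mul0 _
      · have hz : Matrix.single i0 i0 z i k = 0 := by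
          rw [Matrix.single]
          simp only [Matrix.of_apply]
          rw [if_neg (fun h => hik ⟨h.1.symm, h.2.symm⟩)]
        rw [hz]; exact mul0' _
    · have hmem := hC i0 i0
      rw [← Finset.add_sum_erase Finset.univ _ (Finset.mem_univ i0)] at hmem
      rw [Set.mem_add] at hmem
      obtain ⟨s, hs, p, hp, heq⟩ := hmem
      refine ⟨s, ?_, p, ?_, heq.symm⟩
      · simpa [Matrix.single] using hs
      · refine hsumP _ _ ?_ hp
        intro k hk
        have hk' : k ≠ i0 := (Finset.mem_erase.mp hk).1
        have hz : Matrix.single i0 i0 z i0 k = 0 := by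
          rw [Matrix.single]
          simp only [Matrix.of_apply]
          rw [if_neg (fun h => hk' h.2.symm)]
        rw [hz]; exact mul0' _
  have hmain : matHmul M.hmul A A - matHmul M.hmul B B ⊆
      {C : Matrix (Fin m) (Fin m) H | ∀ i j, C i j ∈ P} := by
    intro E hE
    rw [Set.mem_sub] at hE
    obtain ⟨C, hC, D, hD, rfl⟩ := hE
    obtain ⟨hCoff, s, hs, p, hp, hCe⟩ := key x C hC
    obtain ⟨hDoff, t, ht, q, hq, hDe⟩ := key y D hD
    intro i j
    show C i j - D i j ∈ P
    by_cases hij : i = i0 ∧ j = i0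
    · obtain ⟨rfl, rfl⟩ := hij
      rw [hCe, hDe]
      have h1 : s - t ∈ P := hsub (Set.sub_mem_sub hs ht)
      have h2 : p - q ∈ P := hdiff p hp q hq
      have : s + p - (t + q) = (s - t) + (p - q) := by abel
      rw [this]
      exact Padd _ h1 _ h2
    · exact hdiff _ (hCoff i j hij) _ (hDoff i j hij)
  rcases hmat A B hA0 hB0 hmain with h | h
  · left
    have := h i0 i0
    simpa [hA, hB, Matrix.single] using this
  · right
    have := h i0 i0
    simpa [hA, hB, Matrix.single] using this
end

section
/- Let P₁ be a weakly sdf-absorbing strong C-hyperideal of H₁ which is not sdf-absorbing, and P₂ a weakly sdf-absorbing strong C-hyperideal of H₂ which is not sdf-absorbing. Then the following are equivalent: (i) P₁ × P₂ is a weakly sdf-absorbing hyperideal of H₁ × H₂ but not an sdf-absorbing hyperideal; (ii) P₁ × P₂ is a weakly sdf-absorbing hyperideal of H₁ × H₂; (iii) for all x, y ∈ H₁, x² − y² ⊆ P₁ implies 0 ∈ x² − y², and for all u, v ∈ H₂, u² − v² ⊆ P₂ implies 0 ∈ u² − v²; (iv) for all nonzero a, b ∈ H₁ × H₂, a² − b²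 ⊆ P₁ × P₂ implies (0,0) ∈ a² − b². -/
/-!
Square differences in `H₁ × H₂` are the products `(x₁² − y₁²) ×ˢ (x₂² − y₂²)` of nonempty sets,
so such a set lies in `P₁ × P₂` exactly when both factors do, and contains `0` exactly when both
factors do. A pair violating sdf-absorption in one factor, combined with any square difference
inside the other hyperideal, violates it in the product. Hence the product is never
sdf-absorbing, and if it is weakly sdf-absorbing, all these violating pairs must have `0` in
their square difference, which forces (iii). Conversely, under (iii) the defining implication of
a weakly sdf-absorbing hyperideal is vacuous for `P₁ × P₂`.
-/

open Pointwise

namespace Hyper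

variable {H H₁ H₂ : Type*} [AddCommGroup H] [AddCommGroup H₁] [AddCommGroup H₂]

/-- Condition (iii) of the theorem, for one factor. -/
def ZeroMemSqSubOfSubset (mul : H → H → Set H) (P : Set H) : Prop :=
  ∀ x y : H, sq mul x - sq mul y ⊆ P → (0 : H) ∈ sq mul x - sq mul y

def IsSdfCounterexample (mul : H → H → Set H) (P : Set H) (x y : H) : Prop :=
  x ≠ 0 ∧ y ≠ 0 ∧ sq mul x - sq mul y ⊆ P ∧ x - y ∉ P ∧ x + y ∉ P

theorem sq_sub_sq_nonempty (M : MulHyperring H) (x y : H) :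
    (sq M.hmul x - sq M.hmul y).Nonempty :=
  (M.hmul_nonempty x x).sub (M.hmul_nonempty y y)

theorem sq_sub_sq_prodMul (m₁ : H₁ → H₁ → Set H₁) (m₂ : H₂ → H₂ → Set H₂) (a b : H₁ × H₂) :
    sq (prodMul m₁ m₂) a - sq (prodMul m₁ m₂) b =
      (sq m₁ a.1 - sq m₁ b.1) ×ˢ (sq m₂ a.2 - sq m₂ b.2) :=
  Set.prod_sub_prod_comm _ _ _ _

theorem sq_sub_sq_prodMul_subset_iff (M₁ : MulHyperring H₁) (M₂ : MulHyperring H₂)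
    {P₁ : Set H₁} {P₂ : Set H₂} (a b : H₁ × H₂) :
    sq (prodMul M₁.hmul M₂.hmul) a - sq (prodMul M₁.hmul M₂.hmul) b ⊆ P₁ ×ˢ P₂ ↔
      sq M₁.hmul a.1 - sq M₁.hmul b.1 ⊆ P₁ ∧ sq M₂.hmul a.2 - sq M₂.hmul b.2 ⊆ P₂ := by
  rw [sq_sub_sq_prodMul]
  exact Set.prod_subset_prod_iff' ((sq_sub_sq_nonempty M₁ _ _).prod (sq_sub_sq_nonempty M₂ _ _))

theorem zero_mem_sq_sub_sq_prodMul_iff (m₁ : H₁ → H₁ → Set H₁) (m₂ : H₂ → H₂ → Set H₂)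
    (a b : H₁ × H₂) :
    (0 : H₁ × H₂) ∈ sq (prodMul m₁ m₂) a - sq (prodMul m₁ m₂) b ↔
      (0 : H₁) ∈ sq m₁ a.1 - sq m₁ b.1 ∧ (0 : H₂) ∈ sq m₂ a.2 - sq m₂ b.2 := by
  rw [sq_sub_sq_prodMul]
  rfl

theorem IsIdeal.prod {m₁ : H₁ → H₁ → Set H₁} {m₂ : H₂ → H₂ → Set H₂} {P₁ : Set H₁}
    {P₂ : Set H₂} (h₁ : IsIdeal m₁ P₁) (h₂ : IsIdeal m₂ P₂) :
    IsIdeal (prodMul m₁ m₂) (P₁ ×ˢ P₂) := by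
  obtain ⟨h₁0, h₁sub, h₁mul⟩ := h₁
  obtain ⟨h₂0, h₂sub, h₂mul⟩ := h₂
  refine ⟨⟨h₁0, h₂0⟩, fun a ha b hb => ⟨h₁sub _ ha.1 _ hb.1, h₂sub _ ha.2 _ hb.2⟩, ?_⟩
  rintro r a ha ⟨p, q⟩ ⟨hp, hq⟩
  exact ⟨h₁mul _ _ ha.1 hp, h₂mul _ _ ha.2 hq⟩

theorem isWeaklySdf_of_zeroMemSqSubOfSubset {mul : H → H → Set H} {P : Set H}
    (hI : IsIdeal mul P) (hP : P ≠ Set.univ) (h : ZeroMemSqSubOfSubset mul P) :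
    IsWeaklySdf mul P :=
  ⟨hI, hP, fun x y _ _ h0 hsub => absurd (h x y hsub) h0⟩

theorem ZeroMemSqSubOfSubset.prod (M₁ : MulHyperring H₁) (M₂ : MulHyperring H₂)
    {P₁ : Set H₁} {P₂ : Set H₂} (h₁ : ZeroMemSqSubOfSubset M₁.hmul P₁)
    (h₂ : ZeroMemSqSubOfSubset M₂.hmul P₂) :
    ZeroMemSqSubOfSubset (prodMul M₁.hmul M₂.hmul) (P₁ ×ˢ P₂) := by
  intro a b hsub
  rw [sq_sub_sq_prodMul_subset_iff] at hsub
  exact (zero_mem_sq_sub_sq_prodMul_iff _ _ a b).2 ⟨h₁ _ _ hsub.1, h₂ _ _ hsub.2⟩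

theorem exists_isSdfCounterexample_of_not_isSdf {mul : H → H → Set H} {P : Set H}
    (hI : IsIdeal mul P) (hP : P ≠ Set.univ) (h : ¬ IsSdf mul P) :
    ∃ x y, IsSdfCounterexample mul P x y := by
  by_contra! hno
  refine h ⟨hI, hP, fun x y hx hy hsub => ?_⟩
  by_contra! hxy
  exact hno x y ⟨hx, hy, hsub, hxy⟩

theorem IsSdfCounterexample.not_isSdf {mul : H → H → Set H} {P : Set H} {x y : H}
    (h : IsSdfCounterexample mul P x y) : ¬ IsSdf mul P :=
  fun hS => (hS.2.2 x y h.1 h.2.1 h.2.2.1).elim h.2.2.2.1 h.2.2.2.2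

theorem IsWeaklySdf.zero_mem_of_isSdfCounterexample {mul : H → H → Set H} {P : Set H} {x y : H}
    (hw : IsWeaklySdf mul P) (h : IsSdfCounterexample mul P x y) :
    (0 : H) ∈ sq mul x - sq mul y := by
  by_contra h0
  exact (hw.2.2 x y h.1 h.2.1 h0 h.2.2.1).elim h.2.2.2.1 h.2.2.2.2

section Prod

variable {m₁ : H₁ → H₁ → Set H₁} {m₂ : H₂ → H₂ → Set H₂} {P₁ : Set H₁} {P₂ : Set H₂}
  {x₁ y₁ : H₁} {x₂ y₂ : H₂}

theorem IsSdfCounterexample.prod_left (h₁ : IsSdfCounterexample m₁ P₁ x₁ y₁)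
    (h₂ : sq m₂ x₂ - sq m₂ y₂ ⊆ P₂) :
    IsSdfCounterexample (prodMul m₁ m₂) (P₁ ×ˢ P₂) (x₁, x₂) (y₁, y₂) := by
  obtain ⟨hx, hy, hsub, hm, hp⟩ := h₁
  refine ⟨fun h => hx congr($h.1), fun h => hy congr($h.1), ?_, fun h => hm h.1, fun h => hp h.1⟩
  rw [sq_sub_sq_prodMul]
  exact Set.prod_mono hsub h₂

theorem IsSdfCounterexample.prod_right (h₁ : sq m₁ x₁ - sq m₁ y₁ ⊆ P₁)
    (h₂ : IsSdfCounterexample m₂ P₂ x₂ y₂) :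
    IsSdfCounterexample (prodMul m₁ m₂) (P₁ ×ˢ P₂) (x₁, x₂) (y₁, y₂) := by
  obtain ⟨hx, hy, hsub, hm, hp⟩ := h₂
  refine ⟨fun h => hx congr($h.2), fun h => hy congr($h.2), ?_, fun h => hm h.2, fun h => hp h.2⟩
  rw [sq_sub_sq_prodMul]
  exact Set.prod_mono h₁ hsub

theorem zeroMemSqSubOfSubset_of_prod
    (h : ∀ a b, IsSdfCounterexample (prodMul m₁ m₂) (P₁ ×ˢ P₂) a b →
      (0 : H₁ × H₂) ∈ sq (prodMul m₁ m₂) a - sq (prodMul m₁ m₂) b)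
    (h₁ : IsSdfCounterexample m₁ P₁ x₁ y₁) (h₂ : IsSdfCounterexample m₂ P₂ x₂ y₂) :
    ZeroMemSqSubOfSubset m₁ P₁ ∧ ZeroMemSqSubOfSubset m₂ P₂ :=
  ⟨fun x y hsub => ((zero_mem_sq_sub_sq_prodMul_iff m₁ m₂ (x, x₂) (y, y₂)).1
      (h _ _ (h₂.prod_right hsub))).1,
    fun u v hsub => ((zero_mem_sq_sub_sq_prodMul_iff m₁ m₂ (x₁, u) (y₁, v)).1
      (h _ _ (h₁.prod_left hsub))).2⟩

end Prod

end Hyper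

theorem stmt19_general {H₁ H₂ : Type*} [AddCommGroup H₁] [AddCommGroup H₂]
    (M₁ : MulHyperring H₁) (M₂ : MulHyperring H₂)
    (P₁ : Set H₁) (P₂ : Set H₂)
    (h₁w : Hyper.IsWeaklySdf M₁.hmul P₁)
    (h₁n : ¬ Hyper.IsSdf M₁.hmul P₁)
    (h₂w : Hyper.IsWeaklySdf M₂.hmul P₂)
    (h₂n : ¬ Hyper.IsSdf M₂.hmul P₂) :
    ((Hyper.IsWeaklySdf (prodMul M₁.hmul M₂.hmul) (P₁ ×ˢ P₂) ∧
        ¬ Hyper.IsSdf (prodMul M₁.hmul M₂.hmul) (P₁ ×ˢ P₂)) ↔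
      Hyper.IsWeaklySdf (prodMul M₁.hmul M₂.hmul) (P₁ ×ˢ P₂)) ∧
    (Hyper.IsWeaklySdf (prodMul M₁.hmul M₂.hmul) (P₁ ×ˢ P₂) ↔
      ((∀ x y : H₁, Hyper.sq M₁.hmul x - Hyper.sq M₁.hmul y ⊆ P₁ →
          (0 : H₁) ∈ Hyper.sq M₁.hmul x - Hyper.sq M₁.hmul y) ∧
        ∀ u v : H₂, Hyper.sq M₂.hmul u - Hyper.sq M₂.hmul v ⊆ P₂ →
          (0 : H₂) ∈ Hyper.sq M₂.hmul u - Hyper.sq M₂.hmul v)) ∧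
    (((∀ x y : H₁, Hyper.sq M₁.hmul x - Hyper.sq M₁.hmul y ⊆ P₁ →
          (0 : H₁) ∈ Hyper.sq M₁.hmul x - Hyper.sq M₁.hmul y) ∧
        ∀ u v : H₂, Hyper.sq M₂.hmul u - Hyper.sq M₂.hmul v ⊆ P₂ →
          (0 : H₂) ∈ Hyper.sq M₂.hmul u - Hyper.sq M₂.hmul v) ↔
      ∀ a b : H₁ × H₂, a ≠ 0 → b ≠ 0 →
        Hyper.sq (prodMul M₁.hmul M₂.hmul) a - Hyper.sq (prodMul M₁.hmul M₂.hmul) b ⊆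
          P₁ ×ˢ P₂ →
        (0 : H₁ × H₂) ∈
          Hyper.sq (prodMul M₁.hmul M₂.hmul) a - Hyper.sq (prodMul M₁.hmul M₂.hmul) b) := by
  obtain ⟨hI₁, hP₁, -⟩ := h₁w
  obtain ⟨hI₂, hP₂, -⟩ := h₂w
  obtain ⟨x₁, y₁, hc₁⟩ := Hyper.exists_isSdfCounterexample_of_not_isSdf hI₁ hP₁ h₁n
  obtain ⟨x₂, y₂, hc₂⟩ := Hyper.exists_isSdfCounterexample_of_not_isSdf hI₂ hP₂ h₂n
  refine ⟨⟨And.left, fun hw => ⟨hw, ?_⟩⟩, ⟨fun hw => ?_, fun h => ?_⟩,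
    fun h a b _ _ => ?_, fun h => ?_⟩
  · exact (hc₁.prod_left hc₂.2.2.1).not_isSdf
  · exact Hyper.zeroMemSqSubOfSubset_of_prod
      (fun _ _ => hw.zero_mem_of_isSdfCounterexample) hc₁ hc₂
  · exact Hyper.isWeaklySdf_of_zeroMemSqSubOfSubset (hI₁.prod hI₂)
      (fun h => hP₁ (Set.prod_eq_univ.1 h).1) (Hyper.ZeroMemSqSubOfSubset.prod M₁ M₂ h.1 h.2)
  · exact Hyper.ZeroMemSqSubOfSubset.prod M₁ M₂ h.1 h.2 a b
  · exact Hyper.zeroMemSqSubOfSubset_of_prod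
      (fun a b hc => h a b hc.1 hc.2.1 hc.2.2.1) hc₁ hc₂

/-- for weakly sdf-absorbing strong `𝒞`-hyperideals `P₁, P₂` which are
not sdf-absorbing, the four listed conditions are equivalent. -/
theorem stmt19 {H₁ H₂ : Type*} [AddCommGroup H₁] [AddCommGroup H₂]
    (M₁ : MulHyperring H₁) (M₂ : MulHyperring H₂)
    (P₁ : Set H₁) (P₂ : Set H₂)
    (h₁S : Hyper.IsStrongCIdeal M₁.hmul P₁) (h₁w : Hyper.IsWeaklySdf M₁.hmul P₁)
    (h₁n : ¬ Hyper.IsSdf M₁.hmul P₁)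
    (h₂S : Hyper.IsStrongCIdeal M₂.hmul P₂) (h₂w : Hyper.IsWeaklySdf M₂.hmul P₂)
    (h₂n : ¬ Hyper.IsSdf M₂.hmul P₂) :
    ((Hyper.IsWeaklySdf (prodMul M₁.hmul M₂.hmul) (P₁ ×ˢ P₂) ∧
        ¬ Hyper.IsSdf (prodMul M₁.hmul M₂.hmul) (P₁ ×ˢ P₂)) ↔
      Hyper.IsWeaklySdf (prodMul M₁.hmul M₂.hmul) (P₁ ×ˢ P₂)) ∧
    (Hyper.IsWeaklySdf (prodMul M₁.hmul M₂.hmul) (P₁ ×ˢ P₂) ↔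
      ((∀ x y : H₁, Hyper.sq M₁.hmul x - Hyper.sq M₁.hmul y ⊆ P₁ →
          (0 : H₁) ∈ Hyper.sq M₁.hmul x - Hyper.sq M₁.hmul y) ∧
        ∀ u v : H₂, Hyper.sq M₂.hmul u - Hyper.sq M₂.hmul v ⊆ P₂ →
          (0 : H₂) ∈ Hyper.sq M₂.hmul u - Hyper.sq M₂.hmul v)) ∧
    (((∀ x y : H₁, Hyper.sq M₁.hmul x - Hyper.sq M₁.hmul y ⊆ P₁ →
          (0 : H₁) ∈ Hyper.sq M₁.hmul x - Hyper.sq M₁.hmul y) ∧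
        ∀ u v : H₂, Hyper.sq M₂.hmul u - Hyper.sq M₂.hmul v ⊆ P₂ →
          (0 : H₂) ∈ Hyper.sq M₂.hmul u - Hyper.sq M₂.hmul v) ↔
      ∀ a b : H₁ × H₂, a ≠ 0 → b ≠ 0 →
        Hyper.sq (prodMul M₁.hmul M₂.hmul) a - Hyper.sq (prodMul M₁.hmul M₂.hmul) b ⊆
          P₁ ×ˢ P₂ →
        (0 : H₁ × H₂) ∈
          Hyper.sq (prodMul M₁.hmul M₂.hmul) a - Hyper.sq (prodMul M₁.hmul M₂.hmul) b) :=
  stmt19_general M₁ M₂ P₁ P₂ h₁w h₁n h₂w h₂n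
end
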